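/- Self-consistency of the constant-overlap fixed point at large SNR: if mmse(x) = 1 − E tanh(x + √x Z) with Z ∼ N(0,1) and Δ*(λ) solves 1 − Δ* = mmse(λ²Δ*²/Σ*), Σ* = Δ* R'(λΔ*(1−Δ*)/Σ*), where R' is continuous at 0 with R'(0) = 1, then (λ, Δ*, Σ*) = (∞, 1, 1) is consistent: as λ → ∞, 1 − Δ*(λ) = exp(−(λ²/2)(1 + o(1))) and λ(1 − Δ*(λ)) → 0, hence R'(λΔ*(1−Δ*)/Σ*) → 1. -/

import Mathlib

open MeasureTheory ProbabilityTheory Real Filter Topology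

/-- The Rademacher mmse function `mmse(x) = 1 − E[tanh(x + √x Z)]`, `Z ∼ N(0,1)`. -/
noncomputable def radMMSE (x : ℝ) : ℝ :=
  1 - ∫ z, Real.tanh (x + Real.sqrt x * z) ∂(gaussianReal 0 1)

/-!
The upper bound comes from `1 - tanh t ≤ exp (-t)` and the Gaussian moment generating function:
`mmse x ≤ exp (-x) · E exp (-√x Z) = exp (-x / 2)`. The lower bound comes from `1 - tanh t ≥ 1`
for `t ≤ 0`, so `mmse x` dominates the Gaussian mass of `[-√x - 1, -√x]`, which is at least the
density at `√x + 1`. Both give `log mmse x / x → -1/2`; along `x = λ² Δ² / Σ` with `Δ² / Σ → 1`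
this is the rate of `1 - Δ`, which is then so small that `λ (1 - Δ) → 0`.
-/

namespace Real

lemma continuous_tanh : Continuous tanh := by
  rw [show tanh = fun x => sinh x / cosh x from funext tanh_eq_sinh_div_cosh]
  exact continuous_sinh.div continuous_cosh fun x => (cosh_pos x).ne'

lemma abs_tanh_le_one (t : ℝ) : |tanh t| ≤ 1 :=
  abs_le.2 ⟨(neg_one_lt_tanh t).le, (tanh_lt_one t).le⟩

lemma tanh_nonpos {t : ℝ} (ht : t ≤ 0) : tanh t ≤ 0 := by
  rw [tanh_eq_sinh_div_cosh]
  exact div_nonpos_of_nonpos_of_nonneg (sinh_nonpos_iff.2 ht) (cosh_pos t).le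

lemma one_sub_tanh_le_exp_neg (t : ℝ) : 1 - tanh t ≤ exp (-t) := by
  have hprod : exp t * exp (-t) = 1 := by rw [← exp_add, add_neg_cancel, exp_zero]
  have hsum : 0 < exp t + exp (-t) := by positivity
  rw [tanh_eq, one_sub_div hsum.ne', div_le_iff₀ hsum]
  nlinarith [sq_nonneg (exp t - exp (-t)), exp_pos (-t)]

end Real

lemma integrable_tanh_comp {α : Type*} [MeasurableSpace α] {μ : Measure α} [IsFiniteMeasure μ]
    {g : α → ℝ} (hg : AEMeasurable g μ) : Integrable (fun a => tanh (g a)) μ :=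
  .of_bound (continuous_tanh.measurable.comp_aemeasurable hg).aestronglyMeasurable 1
    (ae_of_all _ fun a => abs_tanh_le_one (g a))

lemma integral_exp_mul_gaussianReal (t : ℝ) :
    ∫ z, exp (t * z) ∂gaussianReal 0 1 = exp (t ^ 2 / 2) := by
  simpa [mgf] using congrFun (mgf_fun_id_gaussianReal (μ := 0) (v := 1)) t

lemma measureReal_gaussianReal_eq_setIntegral (s : Set ℝ) :
    (gaussianReal 0 1).real s = ∫ z in s, gaussianPDFReal 0 1 z := by
  rw [measureReal_def, gaussianReal_apply_eq_integral 0 one_ne_zero,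
    ENNReal.toReal_ofReal (integral_nonneg fun z => gaussianPDFReal_nonneg 0 1 z)]

lemma mul_gaussianPDFReal_le_measureReal_Icc {a b M : ℝ} (hab : a ≤ b)
    (hM : ∀ z ∈ Set.Icc a b, |z| ≤ M) :
    (b - a) * gaussianPDFReal 0 1 M ≤ (gaussianReal 0 1).real (Set.Icc a b) := by
  rw [measureReal_gaussianReal_eq_setIntegral, ← Real.volume_real_Icc_of_le hab, mul_comm]
  refine setIntegral_ge_of_const_le_real measurableSet_Icc measure_Icc_lt_top.ne (fun z hz => ?_)
    (integrable_gaussianPDFReal 0 1).integrableOn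
  simp only [gaussianPDFReal, NNReal.coe_one, sub_zero, mul_one]
  gcongr _ * exp (-?_ / _)
  exact sq_le_sq' (abs_le.1 (hM z hz)).1 (abs_le.1 (hM z hz)).2

lemma radMMSE_eq_integral (x : ℝ) :
    radMMSE x = ∫ z, (1 - tanh (x + √x * z)) ∂gaussianReal 0 1 := by
  rw [integral_sub (integrable_const 1) (integrable_tanh_comp (by fun_prop))]
  simp [radMMSE]

lemma radMMSE_le_exp (x : ℝ) (hx : 0 ≤ x) : radMMSE x ≤ exp (-x / 2) := by
  rw [radMMSE_eq_integral]
  calc ∫ z, (1 - tanh (x + √x * z)) ∂gaussianReal 0 1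
      ≤ ∫ z, exp (-x) * exp (-√x * z) ∂gaussianReal 0 1 := by
        refine integral_mono ((integrable_const 1).sub (integrable_tanh_comp (by fun_prop)))
          ((integrable_exp_mul_gaussianReal _).const_mul _) fun z => ?_
        rw [← exp_add, neg_mul, ← neg_add]
        exact one_sub_tanh_le_exp_neg _
    _ = exp (-x / 2) := by
        rw [integral_const_mul, integral_exp_mul_gaussianReal, ← exp_add, neg_sq, sq_sqrt hx]
        ring_nf

lemma gaussianPDFReal_sqrt_add_one_le_radMMSE (x : ℝ) (hx : 0 ≤ x) :
    gaussianPDFReal 0 1 (√x + 1) ≤ radMMSE x := by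
  have hsub : Set.Icc (-√x - 1) (-√x) ⊆ {z | 1 ≤ 1 - tanh (x + √x * z)} := fun z hz => by
    have : √x * z ≤ √x * -√x := mul_le_mul_of_nonneg_left hz.2 (sqrt_nonneg x)
    have : x + √x * z ≤ 0 := by nlinarith [mul_self_sqrt hx]
    simpa using tanh_nonpos this
  calc gaussianPDFReal 0 1 (√x + 1)
      ≤ (gaussianReal 0 1).real (Set.Icc (-√x - 1) (-√x)) := by
        simpa using mul_gaussianPDFReal_le_measureReal_Icc (a := -√x - 1) (b := -√x)
          (M := √x + 1) (by linarith) fun z hz => by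
          rw [abs_le]; constructor <;> linarith [hz.1, hz.2, sqrt_nonneg x]
    _ ≤ (gaussianReal 0 1).real {z | 1 ≤ 1 - tanh (x + √x * z)} := measureReal_mono hsub
    _ ≤ radMMSE x := by
        simpa [radMMSE_eq_integral] using mul_meas_ge_le_integral_of_nonneg
          (ae_of_all _ fun z => sub_nonneg.2 (tanh_lt_one (x + √x * z)).le)
          ((integrable_const 1).sub (integrable_tanh_comp (by fun_prop))) 1

lemma radMMSE_pos (x : ℝ) (hx : 0 ≤ x) : 0 < radMMSE x :=
  (gaussianPDFReal_pos 0 1 _ one_ne_zero).trans_le (gaussianPDFReal_sqrt_add_one_le_radMMSE x hx)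

lemma log_gaussianPDFReal_sqrt_add_one_div (x : ℝ) (hx : 0 < x) :
    log (gaussianPDFReal 0 1 (√x + 1)) / x = -1 / 2 - (log √(2 * π) + 1 / 2) / x - (√x)⁻¹ := by
  simp only [gaussianPDFReal, NNReal.coe_one, sub_zero, mul_one]
  rw [log_mul (by positivity) (exp_pos _).ne', log_inv, log_exp]
  field_simp
  linear_combination (-(√x + 2)) * sq_sqrt hx.le

lemma tendsto_log_radMMSE_div_atTop :
    Tendsto (fun x => log (radMMSE x) / x) atTop (𝓝 (-1 / 2)) := by
  have hlower : Tendsto (fun x => -1 / 2 - (log √(2 * π) + 1 / 2) / x - (√x)⁻¹) atTop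
      (𝓝 (-1 / 2)) := by
    simpa using ((tendsto_const_nhds.div_atTop tendsto_id).const_sub (-1 / 2 : ℝ)).sub
      (tendsto_inv_atTop_zero.comp tendsto_sqrt_atTop)
  refine tendsto_of_tendsto_of_tendsto_of_le_of_le' hlower tendsto_const_nhds ?_ ?_
  · filter_upwards [eventually_gt_atTop 0] with x hx
    rw [← log_gaussianPDFReal_sqrt_add_one_div x hx]
    exact div_le_div_of_nonneg_right (log_le_log (gaussianPDFReal_pos 0 1 _ one_ne_zero)
      (gaussianPDFReal_sqrt_add_one_le_radMMSE x hx.le)) hx.le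
  · filter_upwards [eventually_gt_atTop 0] with x hx
    rw [div_le_iff₀ hx]
    calc log (radMMSE x) ≤ log (exp (-x / 2)) :=
          log_le_log (radMMSE_pos x hx.le) (radMMSE_le_exp x hx.le)
      _ = -1 / 2 * x := by rw [log_exp]; ring

variable {r : ℝ → ℝ}

lemma tendsto_log_radMMSE_sq_mul_div_sq (hr : Tendsto r atTop (𝓝 1)) :
    Tendsto (fun l => log (radMMSE (l ^ 2 * r l)) / l ^ 2) atTop (𝓝 (-1 / 2)) := by
  have hx : Tendsto (fun l => l ^ 2 * r l) atTop atTop :=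
    (tendsto_pow_atTop two_ne_zero).atTop_mul_pos one_pos hr
  have h := (tendsto_log_radMMSE_div_atTop.comp hx).mul hr
  rw [mul_one] at h
  refine h.congr' ?_
  filter_upwards [eventually_gt_atTop 0, hr.eventually_ne one_ne_zero] with l hl hrl
  simp only [Function.comp_apply]
  field_simp

lemma tendsto_mul_radMMSE_sq_mul (hr : Tendsto r atTop (𝓝 1)) :
    Tendsto (fun l => l * radMMSE (l ^ 2 * r l)) atTop (𝓝 0) := by
  have hlim : Tendsto (fun l : ℝ => l * exp (-l)) atTop (𝓝 0) := by
    simpa using tendsto_pow_mul_exp_neg_atTop_nhds_zero 1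
  refine tendsto_of_tendsto_of_tendsto_of_le_of_le' tendsto_const_nhds hlim ?_ ?_
  · filter_upwards [eventually_gt_atTop 0, hr.eventually (eventually_ge_nhds one_half_lt_one)]
      with l hl hrl
    exact mul_nonneg hl.le (radMMSE_pos _ (by positivity)).le
  · filter_upwards [eventually_ge_atTop 4, hr.eventually (eventually_ge_nhds one_half_lt_one)]
      with l hl hrl
    have hx : l ^ 2 / 2 ≤ l ^ 2 * r l := by nlinarith
    gcongr
    calc radMMSE (l ^ 2 * r l) ≤ exp (-(l ^ 2 * r l) / 2) := radMMSE_le_exp _ (by nlinarith)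
      _ ≤ exp (-l) := exp_le_exp.2 (by nlinarith)

theorem amp_fixed_point_large_snr_general
    (R' : ℝ → ℝ) (hR'cont : ContinuousAt R' 0) (hR'0 : R' 0 = 1)
    (Δ Sig : ℝ → ℝ)
    (hfix1 : ∀ lam : ℝ, 0 < lam →
      1 - Δ lam = radMMSE (lam^2 * (Δ lam)^2 / Sig lam))
    (hΔlim : Tendsto Δ atTop (nhds 1))
    (hSiglim : Tendsto Sig atTop (nhds 1)) :
    Tendsto (fun lam : ℝ => Real.log (1 - Δ lam) / lam^2) atTop (nhds (-(1:ℝ)/2))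
    ∧ Tendsto (fun lam : ℝ => lam * (1 - Δ lam)) atTop (nhds 0)
    ∧ Tendsto (fun lam : ℝ => R' (lam * Δ lam * (1 - Δ lam) / Sig lam))
        atTop (nhds 1) := by
  have hr : Tendsto (fun lam => Δ lam ^ 2 / Sig lam) atTop (𝓝 (1 ^ 2 / 1)) :=
    (hΔlim.pow 2).div hSiglim one_ne_zero
  rw [one_pow, div_one] at hr
  have hfix : ∀ᶠ lam in atTop, radMMSE (lam ^ 2 * (Δ lam ^ 2 / Sig lam)) = 1 - Δ lam := by
    filter_upwards [eventually_gt_atTop 0] with lam hlam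
    rw [hfix1 lam hlam, mul_div_assoc]
  have hrate : Tendsto (fun lam => lam * (1 - Δ lam)) atTop (𝓝 0) :=
    (tendsto_mul_radMMSE_sq_mul hr).congr' (hfix.mono fun lam h => by rw [h])
  refine ⟨?_, hrate, ?_⟩
  · exact (tendsto_log_radMMSE_sq_mul_div_sq hr).congr' (hfix.mono fun lam h => by rw [h])
  · have harg : Tendsto (fun lam => lam * Δ lam * (1 - Δ lam) / Sig lam) atTop
        (𝓝 (0 * (1 / 1))) :=
      (hrate.mul (hΔlim.div hSiglim one_ne_zero)).congr fun lam => by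
        simp only [Pi.div_apply]; ring
    rw [zero_mul] at harg
    simpa only [Function.comp_def, hR'0] using hR'cont.tendsto.comp harg

/-- Self-consistency of the constant-overlap fixed point at large SNR: if
`(Δ*(λ), Σ*(λ))` solves the one-step AMP fixed-point system
`1 − Δ* = mmse(λ²Δ*²/Σ*)`, `Σ* = Δ* R'(λΔ*(1−Δ*)/Σ*)`, with `R'` continuous at `0`,
`R'(0) = 1`, and `Δ* → 1`, `Σ* → 1` as `λ → ∞`, then
`1 − Δ*(λ) = exp(−(λ²/2)(1 + o(1)))` (i.e. `log(1 − Δ*(λ))/λ² → −1/2`),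
`λ(1 − Δ*(λ)) → 0`, and `R'(λΔ*(1−Δ*)/Σ*) → 1`. -/
theorem amp_fixed_point_large_snr
    (R' : ℝ → ℝ) (hR'cont : ContinuousAt R' 0) (hR'0 : R' 0 = 1)
    (Δ Sig : ℝ → ℝ)
    (hΔ : ∀ lam : ℝ, 0 < lam → Δ lam ∈ Set.Ioc (0:ℝ) 1)
    (hSig : ∀ lam : ℝ, 0 < lam → 0 < Sig lam)
    (hfix1 : ∀ lam : ℝ, 0 < lam →
      1 - Δ lam = radMMSE (lam^2 * (Δ lam)^2 / Sig lam))
    (hfix2 : ∀ lam : ℝ, 0 < lam →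
      Sig lam = Δ lam * R' (lam * Δ lam * (1 - Δ lam) / Sig lam))
    (hΔlim : Tendsto Δ atTop (nhds 1))
    (hSiglim : Tendsto Sig atTop (nhds 1)) :
    Tendsto (fun lam : ℝ => Real.log (1 - Δ lam) / lam^2) atTop (nhds (-(1:ℝ)/2))
    ∧ Tendsto (fun lam : ℝ => lam * (1 - Δ lam)) atTop (nhds 0)
    ∧ Tendsto (fun lam : ℝ => R' (lam * Δ lam * (1 - Δ lam) / Sig lam))
        atTop (nhds 1) :=
  amp_fixed_point_large_snr_general R' hR'cont hR'0 Δ Sig hfix1 hΔlim hSiglim
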